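/- Let F be an abelian field of conductor f_F and K ⊆ F, K ≠ ℚ, a subfield in which some prime p ramified in F/ℚ splits completely. Then N_{F/K}(θ_F) = 0. -/

import Mathlib

/-!
Write `f_F = p ^ k * m` with `p ∤ m` and `k ≥ 1`. Over each unit `b` mod `m`, the coefficients
`1/2 - a/f_F` of the units `a` mod `f_F` lying above `b` sum to `(1/2 - b/m) - (1/2 - c/m)` with
`p c ≡ b (mod m)`: all residues above `b` contribute `1/2 - b/m`, and the non-units among them,
the multiples of `p`, contribute `1/2 - c/m`. Hence `θ_F` maps to `(1 - σ_p⁻¹) θ_m` in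
`ℚ[(ℤ/m)ˣ]`. The projection to `Gal(K/ℚ)` factors through `(ℤ/m)ˣ` because `f_K ∣ m`, and it
sends `σ_p` to the Frobenius of `p` in `K`, which is trivial.
-/

/-- The normalized Stickelberger element `θ_F = -∑'_{0<a<f} (1/2 - a/f)·σ_a⁻¹` of an abelian
field `F` with Galois group `G` and conductor `f`, where the Artin symbol `a ↦ σ_a = (F/a)`
is encoded as a homomorphism `σ : (ZMod f)ˣ →* G`. -/
noncomputable def stickelberger (f : ℕ) [NeZero f] {G : Type*} [CommGroup G]
    (σ : (ZMod f)ˣ →* G) : MonoidAlgebra ℚ G :=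
  -∑ a : (ZMod f)ˣ,
    MonoidAlgebra.single ((σ a)⁻¹) ((1 : ℚ) / 2 - (((a : ZMod f).val : ℚ)) / (f : ℚ))

/-- `σ` is the Artin map of an abelian field whose conductor is exactly `f`: it is surjective
and does not factor through `(ZMod d)ˣ` for any proper divisor `d` of `f`. -/
def IsConductor (f : ℕ) [NeZero f] {G : Type*} [CommGroup G] (σ : (ZMod f)ˣ →* G) : Prop :=
  Function.Surjective σ ∧
    ∀ (d : ℕ) (hd : d ∣ f), (∀ a : (ZMod f)ˣ, ZMod.unitsMap hd a = 1 → σ a = 1) → d = f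

/-- The Frobenius (Artin symbol) of a rational prime `p` unramified in the abelian field with
Artin map `σ : (ZMod f)ˣ →* G` (and `1` if `p` divides `f`). -/
noncomputable def frob (f : ℕ) [NeZero f] {G : Type*} [CommGroup G] (σ : (ZMod f)ˣ →* G)
    (p : ℕ) : G :=
  if h : Nat.Coprime p f then σ (ZMod.unitOfCoprime p h) else 1

open Finset

def stickelbergerCoeff (f x : ℕ) : ℚ := 1 / 2 - x / f

lemma stickelbergerCoeff_mul_mul {p : ℕ} (hp : p ≠ 0) (f x : ℕ) :
    stickelbergerCoeff (p * f) (p * x) = stickelbergerCoeff f x := by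
  simp only [stickelbergerCoeff, Nat.cast_mul]
  rw [mul_div_mul_left _ _ (Nat.cast_ne_zero.mpr hp)]

lemma sum_range_stickelbergerCoeff_add_mul {m t : ℕ} (hm : m ≠ 0) (ht : t ≠ 0) (b : ℕ) :
    ∑ j ∈ range t, stickelbergerCoeff (t * m) (b + j * m) = stickelbergerCoeff m b := by
  have hsum (n : ℕ) : ∑ j ∈ range n, (j : ℚ) = n * (n - 1) / 2 := by
    induction n with
    | zero => simp
    | succ n ih => rw [sum_range_succ, ih]; push_cast; ring
  have hterm (j : ℕ) : stickelbergerCoeff (t * m) (b + j * m) =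
      stickelbergerCoeff (t * m) b - j / t := by
    simp only [stickelbergerCoeff]; push_cast; field_simp; ring
  simp only [hterm, sum_sub_distrib, sum_const, card_range, nsmul_eq_mul, ← sum_div, hsum]
  simp only [stickelbergerCoeff]; push_cast; field_simp; ring

lemma sum_filter_mod_eq_sum_range {M : Type*} [AddCommMonoid M] {m b : ℕ} (hb : b < m)
    (t : ℕ) (F : ℕ → M) :
    ∑ x ∈ range (t * m) with x % m = b, F x = ∑ j ∈ range t, F (b + j * m) := by
  have hm : 0 < m := by omega
  refine sum_nbij' (· / m) (b + · * m) ?_ ?_ ?_ ?_ ?_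
  · intro x hx
    simp only [mem_filter, mem_range] at hx ⊢
    exact Nat.div_lt_of_lt_mul (mul_comm t m ▸ hx.1)
  · intro j hj
    simp only [mem_filter, mem_range] at hj ⊢
    refine ⟨?_, by rw [Nat.add_mul_mod_self_right, Nat.mod_eq_of_lt hb]⟩
    nlinarith
  · intro x hx
    simp only [mem_filter, mem_range] at hx
    rw [← hx.2, Nat.mod_add_div' x m]
  · intro j _
    rw [Nat.add_mul_div_right _ _ hm, Nat.div_eq_of_lt hb, zero_add]
  · intro x hx
    simp only [mem_filter] at hx
    rw [← hx.2, Nat.mod_add_div' x m]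

lemma sum_filter_mod_stickelbergerCoeff {m b t : ℕ} (hb : b < m) (ht : t ≠ 0) :
    ∑ x ∈ range (t * m) with x % m = b, stickelbergerCoeff (t * m) x =
      stickelbergerCoeff m b := by
  rw [sum_filter_mod_eq_sum_range hb, sum_range_stickelbergerCoeff_add_mul (by omega) ht]

lemma sum_filter_and_dvd {M : Type*} [AddCommMonoid M] {p : ℕ} (hp : p ≠ 0) (N : ℕ)
    (P : ℕ → Prop) [DecidablePred P] (F : ℕ → M) :
    ∑ x ∈ range (p * N) with P x ∧ p ∣ x, F x = ∑ y ∈ range N with P (p * y), F (p * y) := by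
  have hp' : 0 < p := Nat.pos_of_ne_zero hp
  refine (sum_nbij' (p * ·) (· / p) ?_ ?_ ?_ ?_ ?_).symm
  · intro y hy
    simp only [mem_filter, mem_range] at hy ⊢
    exact ⟨by nlinarith, hy.2, dvd_mul_right p y⟩
  · rintro x hx
    simp only [mem_filter, mem_range] at hx ⊢
    obtain ⟨hxN, hPx, y, rfl⟩ := hx
    rw [Nat.mul_div_cancel_left y hp']
    exact ⟨by nlinarith, hPx⟩
  · intro y _
    exact Nat.mul_div_cancel_left y hp'
  · intro x hx
    exact Nat.mul_div_cancel' (mem_filter.mp hx).2.2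
  · intro y _
    rfl

lemma sum_filter_mod_not_dvd_stickelbergerCoeff {p m k b c : ℕ} (hp : p ≠ 0)
    (hpm : p.Coprime m) (hk : k ≠ 0) (hb : b < m) (hc : c < m) (hpc : p * c % m = b) :
    ∑ x ∈ range (p ^ k * m) with x % m = b ∧ ¬ p ∣ x, stickelbergerCoeff (p ^ k * m) x =
      stickelbergerCoeff m b - stickelbergerCoeff m c := by
  have hmul_iff (y : ℕ) : p * y % m = b ↔ y % m = c := by
    have : p * y ≡ p * c [MOD m] ↔ y ≡ c [MOD m] :=
      ⟨Nat.ModEq.cancel_left_of_coprime hpm.symm, fun h => h.mul_left p⟩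
    rwa [Nat.ModEq, Nat.ModEq, hpc, Nat.mod_eq_of_lt hc] at this
  have hmultiples : ∑ x ∈ range (p ^ k * m) with x % m = b ∧ p ∣ x,
      stickelbergerCoeff (p ^ k * m) x = stickelbergerCoeff m c := by
    obtain ⟨k, rfl⟩ := Nat.exists_eq_succ_of_ne_zero hk
    rw [pow_succ', mul_assoc, sum_filter_and_dvd hp]
    simp only [stickelbergerCoeff_mul_mul hp, hmul_iff]
    exact sum_filter_mod_stickelbergerCoeff hc (pow_ne_zero _ hp)
  have hsplit := sum_filter_add_sum_filter_not ((range (p ^ k * m)).filter (· % m = b))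
    (fun x => ¬ p ∣ x) (stickelbergerCoeff (p ^ k * m))
  simp only [filter_filter, not_not, hmultiples,
    sum_filter_mod_stickelbergerCoeff hb (pow_ne_zero k hp)] at hsplit
  exact eq_sub_of_add_eq hsplit

lemma ZMod.val_unitsMap {m n : ℕ} [NeZero n] (h : m ∣ n) (a : (ZMod n)ˣ) :
    (ZMod.unitsMap h a : ZMod m).val = (a : ZMod n).val % m := by
  rw [ZMod.unitsMap_val, ZMod.cast_eq_val, ZMod.val_natCast]

lemma ZMod.unitsMap_unitOfCoprime {m n : ℕ} (h : m ∣ n) (x : ℕ) (hn : x.Coprime n)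
    (hm : x.Coprime m) : ZMod.unitsMap h (ZMod.unitOfCoprime x hn) = ZMod.unitOfCoprime x hm :=
  Units.ext <| by
    rw [ZMod.unitsMap_val, ZMod.coe_unitOfCoprime, ZMod.coe_unitOfCoprime, ZMod.cast_natCast h]

lemma ZMod.val_unitOfCoprime_mul {m : ℕ} (p : ℕ) (hpm : p.Coprime m) (c : (ZMod m)ˣ) :
    ((ZMod.unitOfCoprime p hpm * c : (ZMod m)ˣ) : ZMod m).val = p * (c : ZMod m).val % m := by
  rw [Units.val_mul, ZMod.val_mul, ZMod.coe_unitOfCoprime, ZMod.val_natCast, Nat.mod_mul_mod]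

lemma sum_units_fiber_stickelbergerCoeff {p m k : ℕ} [NeZero m] [NeZero (p ^ k * m)]
    (hp : p.Prime) (hpm : p.Coprime m) (hk : k ≠ 0) (b : (ZMod m)ˣ) :
    ∑ a : (ZMod (p ^ k * m))ˣ with ZMod.unitsMap (dvd_mul_left m (p ^ k)) a = b,
        stickelbergerCoeff (p ^ k * m) (a : ZMod (p ^ k * m)).val =
      stickelbergerCoeff m (b : ZMod m).val -
        stickelbergerCoeff m (((ZMod.unitOfCoprime p hpm)⁻¹ * b : (ZMod m)ˣ) : ZMod m).val := by
  set n := p ^ k * m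
  have hpc : p * (((ZMod.unitOfCoprime p hpm)⁻¹ * b : (ZMod m)ˣ) : ZMod m).val % m =
      (b : ZMod m).val := by
    rw [← ZMod.val_unitOfCoprime_mul p hpm, mul_inv_cancel_left]
  rw [← sum_filter_mod_not_dvd_stickelbergerCoeff hp.ne_zero hpm hk (ZMod.val_lt _)
    (ZMod.val_lt _) hpc]
  refine sum_bij (fun a _ => (a : ZMod n).val) ?_ ?_ ?_ (fun _ _ => rfl)
  · intro a ha
    simp only [mem_filter, mem_univ, true_and] at ha
    simp only [mem_filter, mem_range]
    refine ⟨ZMod.val_lt _, by rw [← ZMod.val_unitsMap (dvd_mul_left m _), ha], fun hpa => ?_⟩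
    exact hp.coprime_iff_not_dvd.mp
      (Nat.Coprime.coprime_dvd_left hpa (ZMod.val_coe_unit_coprime a))
      (dvd_mul_of_dvd_left (dvd_pow_self p hk) m)
  · intro a₁ _ a₂ _ h
    exact Units.ext (ZMod.val_injective n h)
  · intro x hx
    simp only [mem_filter, mem_range] at hx
    obtain ⟨hxn, hxb, hpx⟩ := hx
    have hxm : x.Coprime m := by
      rw [Nat.Coprime, Nat.gcd_comm, Nat.gcd_rec, hxb]
      exact ZMod.val_coe_unit_coprime b
    have hx : x.Coprime n :=
      Nat.Coprime.mul_right (Nat.Coprime.pow_right _ ((hp.coprime_iff_not_dvd.mpr hpx).symm)) hxm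
    refine ⟨ZMod.unitOfCoprime x hx, mem_filter.mpr ⟨mem_univ _, ?_⟩, ?_⟩
    · refine Units.ext (ZMod.val_injective m ?_)
      rw [ZMod.val_unitsMap, ZMod.coe_unitOfCoprime, ZMod.val_natCast, Nat.mod_eq_of_lt hxn, hxb]
    · rw [ZMod.coe_unitOfCoprime, ZMod.val_natCast, Nat.mod_eq_of_lt hxn]

lemma stickelberger_eq_sum_stickelbergerCoeff (f : ℕ) [NeZero f] {G : Type*} [CommGroup G]
    (σ : (ZMod f)ˣ →* G) :
    stickelberger f σ =
      -∑ a : (ZMod f)ˣ, MonoidAlgebra.single (σ a)⁻¹ (stickelbergerCoeff f (a : ZMod f).val) :=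
  rfl

lemma MonoidAlgebra.sum_single_eq_sum_fiberwise {ι κ R M : Type*} [Fintype κ] [DecidableEq κ]
    [Semiring R] (s : Finset ι) (g : ι → κ) (h : κ → M) (f : ι → R) :
    ∑ i ∈ s, single (h (g i)) (f i) = ∑ j, single (h j) (∑ i ∈ s with g i = j, f i) := by
  rw [← sum_fiberwise s g]
  refine sum_congr rfl fun j _ => ?_
  calc ∑ i ∈ s with g i = j, single (h (g i)) (f i)
      = ∑ i ∈ s with g i = j, single (h j) (f i) :=
        sum_congr rfl fun i hi => by rw [(mem_filter.mp hi).2]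
    _ = single (h j) (∑ i ∈ s with g i = j, f i) := (map_sum (singleAddHom (h j)) f _).symm

lemma stickelberger_eq_mapDomainRingHom (f : ℕ) [NeZero f] {G : Type*} [CommGroup G]
    (σ : (ZMod f)ˣ →* G) :
    stickelberger f σ = MonoidAlgebra.mapDomainRingHom ℚ σ (stickelberger f (.id _)) := by
  simp only [stickelberger, map_neg, map_sum, MonoidAlgebra.mapDomainRingHom_apply,
    MonoidAlgebra.mapDomain_single, MonoidHom.id_apply, map_inv]

lemma mapDomainRingHom_unitsMap_stickelberger {p m k : ℕ} [NeZero m] [NeZero (p ^ k * m)]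
    (hp : p.Prime) (hpm : p.Coprime m) (hk : k ≠ 0) :
    MonoidAlgebra.mapDomainRingHom ℚ (ZMod.unitsMap (dvd_mul_left m (p ^ k)))
        (stickelberger (p ^ k * m) (.id _)) =
      (1 - MonoidAlgebra.single (ZMod.unitOfCoprime p hpm)⁻¹ 1) * stickelberger m (.id _) := by
  simp only [stickelberger_eq_sum_stickelbergerCoeff, map_neg, map_sum,
    MonoidAlgebra.mapDomainRingHom_apply, MonoidAlgebra.mapDomain_single, MonoidHom.id_apply,
    map_inv]
  rw [MonoidAlgebra.sum_single_eq_sum_fiberwise _ _ (·⁻¹)]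
  simp only [sum_units_fiber_stickelbergerCoeff hp hpm hk, MonoidAlgebra.single_sub,
    sum_sub_distrib]
  generalize ZMod.unitOfCoprime p hpm = u
  have hshift : ∑ b : (ZMod m)ˣ, MonoidAlgebra.single b⁻¹
        (stickelbergerCoeff m ((u⁻¹ * b : (ZMod m)ˣ) : ZMod m).val) =
      MonoidAlgebra.single u⁻¹ 1 * ∑ b : (ZMod m)ˣ, MonoidAlgebra.single b⁻¹
        (stickelbergerCoeff m (b : ZMod m).val) := by
    rw [mul_sum]
    refine Fintype.sum_equiv (Equiv.mulLeft u⁻¹) _ _ fun b => ?_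
    simp [MonoidAlgebra.single_mul_single, mul_comm]
  rw [hshift]
  ring

lemma mapDomainRingHom_stickelberger_eq_zero {p m k : ℕ} [NeZero m] [NeZero (p ^ k * m)]
    (hp : p.Prime) (hpm : p.Coprime m) (hk : k ≠ 0) {G H : Type*} [CommGroup G] [CommGroup H]
    (σ : (ZMod (p ^ k * m))ˣ →* G) (π : G →* H) (ψ : (ZMod m)ˣ →* H)
    (hfactor : π.comp σ = ψ.comp (ZMod.unitsMap (dvd_mul_left m (p ^ k))))
    (hψp : ψ (ZMod.unitOfCoprime p hpm) = 1) :
    MonoidAlgebra.mapDomainRingHom ℚ π (stickelberger (p ^ k * m) σ) = 0 := by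
  calc MonoidAlgebra.mapDomainRingHom ℚ π (stickelberger (p ^ k * m) σ)
      = MonoidAlgebra.mapDomainRingHom ℚ ψ (MonoidAlgebra.mapDomainRingHom ℚ
          (ZMod.unitsMap (dvd_mul_left m (p ^ k))) (stickelberger (p ^ k * m) (.id _))) := by
        rw [stickelberger_eq_mapDomainRingHom _ σ, ← RingHom.comp_apply,
          ← MonoidAlgebra.mapDomainRingHom_comp, hfactor, MonoidAlgebra.mapDomainRingHom_comp,
          RingHom.comp_apply]
    _ = MonoidAlgebra.mapDomainRingHom ℚ ψ ((1 - MonoidAlgebra.single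
          (ZMod.unitOfCoprime p hpm)⁻¹ 1) * stickelberger m (.id _)) := by
        rw [mapDomainRingHom_unitsMap_stickelberger hp hpm hk]
    _ = 0 := by
        rw [map_mul, map_sub, map_one, MonoidAlgebra.mapDomainRingHom_apply,
          MonoidAlgebra.mapDomain_single, map_inv, hψp, inv_one, ← MonoidAlgebra.one_def,
          sub_self, zero_mul]

theorem stickelberger_restriction_eq_zero_general (fF fK : ℕ) [NeZero fF] [NeZero fK]
    {GF GK : Type*} [CommGroup GF] [CommGroup GK]
    (σF : (ZMod fF)ˣ →* GF) (σK : (ZMod fK)ˣ →* GK)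
    (hdvd : fK ∣ fF) (π : GF →* GK)
    (hcomp : ∀ a : (ZMod fF)ˣ, π (σF a) = σK (ZMod.unitsMap hdvd a))
    (p : ℕ) (hp : p.Prime) (hram : p ∣ fF) (hunram : ¬ p ∣ fK)
    (hsplit : frob fK σK p = 1) :
    MonoidAlgebra.mapDomainRingHom ℚ π (stickelberger fF σF) = 0 := by
  obtain ⟨k, m, hpm, rfl⟩ := Nat.exists_eq_pow_mul_and_not_dvd (NeZero.ne fF) p hp.ne_one
  have hk : k ≠ 0 := by rintro rfl; exact hpm (by simpa using hram)
  have : NeZero m := ⟨right_ne_zero_of_mul (NeZero.ne (p ^ k * m))⟩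
  have hpK : p.Coprime fK := hp.coprime_iff_not_dvd.mpr hunram
  have hpm : p.Coprime m := hp.coprime_iff_not_dvd.mpr hpm
  have hKm : fK ∣ m := (Nat.Coprime.pow_left k hpK).symm.dvd_of_dvd_mul_left hdvd
  refine mapDomainRingHom_stickelberger_eq_zero hp hpm hk σF π (σK.comp (ZMod.unitsMap hKm))
    ?_ ?_
  · ext a
    rw [MonoidHom.comp_apply, hcomp, MonoidHom.comp_apply, MonoidHom.comp_apply,
      ← MonoidHom.comp_apply (ZMod.unitsMap hKm), ZMod.unitsMap_comp]
  · rw [← hsplit, frob, dif_pos hpK, MonoidHom.comp_apply, ZMod.unitsMap_unitOfCoprime]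

/-- If some prime `p` ramified in `F/ℚ` splits completely in `K/ℚ` (`K ≠ ℚ`), then
`N_{F/K}(θ_F) = 0`. -/
theorem stickelberger_restriction_eq_zero (fF fK : ℕ) [NeZero fF] [NeZero fK] (hK : 1 < fK)
    {GF GK : Type*} [CommGroup GF] [CommGroup GK]
    (σF : (ZMod fF)ˣ →* GF) (σK : (ZMod fK)ˣ →* GK)
    (hcondF : IsConductor fF σF) (hcondK : IsConductor fK σK)
    (hdvd : fK ∣ fF) (π : GF →* GK) (hπ : Function.Surjective π)
    (hcomp : ∀ a : (ZMod fF)ˣ, π (σF a) = σK (ZMod.unitsMap hdvd a))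
    (p : ℕ) (hp : p.Prime) (hram : p ∣ fF) (hunram : ¬ p ∣ fK)
    (hsplit : frob fK σK p = 1) :
    MonoidAlgebra.mapDomainRingHom ℚ π (stickelberger fF σF) = 0 :=
  stickelberger_restriction_eq_zero_general fF fK σF σK hdvd π hcomp p hp hram hunram hsplit
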